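/- If a unilateral weighted shift S with positive bounded weights possesses Bishop's property (β), then r₁(S) = r(S), where r₁(S) = lim [m(Sⁿ)]^{1/n} with m the lower bound, and r(S) the spectral radius. -/

import Mathlib

open Filter

section Defs

variable {X : Type*} [NormedAddCommGroup X] [NormedSpace ℂ X]

/-- `T` possesses Bishop's property (β). -/
def HasBishopBeta (T : X →L[ℂ] X) : Prop :=
  ∀ U : Set ℂ, IsOpen U →
    ∀ f : ℕ → ℂ → X, (∀ n, AnalyticOnNhd ℂ (f n) U) →
      (∀ K : Set ℂ, K ⊆ U → IsCompact K →
        TendstoUniformlyOn (fun n z => (T - z • (1 : X →L[ℂ] X)) (f n z)) 0 atTop K) →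
      ∀ K : Set ℂ, K ⊆ U → IsCompact K →
        TendstoUniformlyOn (fun n z => f n z) 0 atTop K

/-- The lower bound `m(T) = inf {‖T x‖ : ‖x‖ = 1}` of an operator `T`. -/
noncomputable def lowerBound (T : X →L[ℂ] X) : ℝ :=
  sInf ((fun x => ‖T x‖) '' Metric.sphere (0 : X) 1)

end Defs

/-!
Write `β n = ω 0 ⋯ ω (n - 1)`, so that `Sⁿ e_k = (β (k + n) / β k) e_(k+n)`: the norm of `Sⁿ`
is `sup_k β (k + n) / β k` and its lower bound `m(Sⁿ)` is `inf_k β (k + n) / β k`. Since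
`m(Sⁿ) ≤ ‖Sⁿ‖`, Gelfand's formula bounds `m(Sⁿ)^(1/n)` from above by `r(S)` asymptotically.

For the lower bound, property (β) gives for all `0 < τ₁ < τ₂` a growth dichotomy: every index `q`
has either risen at most like `τ₂ᵅ` over each window `[q - α, q]`, or rises at least like `τ₁ᵞ` over
each window `[q, q + γ]`, up to a constant. Otherwise the bad windows yield approximate
eigenvectors `F_ν` with `‖F_ν‖ ≥ 1` and `(S - z) F_ν → 0` uniformly on the annulus `τ₁ < |z| < τ₂`.
Given `t < u < r(S)`, Gelfand's formula provides windows `[l, l + m]` over which `β` rises faster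
than `uᵐ`; two applications of the dichotomy show that every index after `l + m` rises at rate at
least `t`, whence `m(Sⁿ) ≥ c tⁿ` for all large `n`.
-/

open Finset Topology

noncomputable def weightProd (ω : ℕ → ℝ) (n : ℕ) : ℝ := ∏ i ∈ range n, ω i

lemma weightProd_pos {ω : ℕ → ℝ} (hpos : ∀ n, 0 < ω n) (n : ℕ) : 0 < weightProd ω n :=
  prod_pos fun i _ => hpos i

lemma weightProd_succ (ω : ℕ → ℝ) (n : ℕ) : weightProd ω (n + 1) = weightProd ω n * ω n :=
  prod_range_succ _ _

lemma Orthonormal.norm_sum_smul_sq {𝕜 E ι : Type*} [RCLike 𝕜] [NormedAddCommGroup E]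
    [InnerProductSpace 𝕜 E] {v : ι → E} (hv : Orthonormal 𝕜 v) (s : Finset ι) (c : ι → 𝕜) :
    ‖∑ i ∈ s, c i • v i‖ ^ 2 = ∑ i ∈ s, ‖c i‖ ^ 2 := by
  have h := inner_self_eq_norm_sq_to_K (𝕜 := 𝕜) (∑ i ∈ s, c i • v i)
  rw [hv.inner_sum c c s] at h
  simp_rw [RCLike.conj_mul] at h
  exact_mod_cast h.symm

section WeightedShift

variable {H : Type*} [NormedAddCommGroup H] [InnerProductSpace ℂ H]

def IsWeightedShift (S : H →L[ℂ] H) (e : ℕ → H) (ω : ℕ → ℝ) : Prop :=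
  ∀ n, S (e n) = (ω n : ℂ) • e (n + 1)

variable {S : H →L[ℂ] H} {e : ℕ → H} {ω : ℕ → ℝ}

lemma IsWeightedShift.pow_apply (hS : IsWeightedShift S e ω) (hpos : ∀ n, 0 < ω n) (n k : ℕ) :
    (S ^ n) (e k) = ((weightProd ω (k + n) / weightProd ω k : ℝ) : ℂ) • e (k + n) := by
  induction n generalizing k with
  | zero => simp [div_self (weightProd_pos hpos k).ne']
  | succ n ih =>
    rw [pow_succ, mul_apply_eq_comp, hS, map_smul, ih, smul_smul, ← Complex.ofReal_mul,
      weightProd_succ, show k + 1 + n = k + (n + 1) by omega]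
    congr 2
    field_simp [(weightProd_pos hpos k).ne', (hpos k).ne']

lemma IsWeightedShift.norm_pow_apply_sum_sq (hS : IsWeightedShift S e ω) (hpos : ∀ n, 0 < ω n)
    (he : Orthonormal ℂ e) (n : ℕ) (s : Finset ℕ) (c : ℕ → ℂ) :
    ‖(S ^ n) (∑ k ∈ s, c k • e k)‖ ^ 2
      = ∑ k ∈ s, ‖c k‖ ^ 2 * (weightProd ω (k + n) / weightProd ω k) ^ 2 := by
  have he' : Orthonormal ℂ fun k => e (k + n) := he.comp _ (add_left_injective n)
  simp_rw [map_sum, map_smul, hS.pow_apply hpos, smul_smul]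
  rw [he'.norm_sum_smul_sq]
  simp [mul_pow, div_pow, sq_abs]

end WeightedShift

lemma HilbertBasis.denseRange_linearCombination {ι 𝕜 E : Type*} [RCLike 𝕜] [NormedAddCommGroup E]
    [InnerProductSpace 𝕜 E] (e : HilbertBasis ι 𝕜 E) :
    DenseRange (Finsupp.linearCombination 𝕜 e) := by
  rw [DenseRange, ← LinearMap.coe_range, Finsupp.range_linearCombination,
    Submodule.dense_iff_topologicalClosure_eq_top]
  exact e.dense_span

section LowerBound

variable {X : Type*} [NormedAddCommGroup X] [NormedSpace ℂ X]

lemma lowerBound_nonneg (T : X →L[ℂ] X) : 0 ≤ lowerBound T :=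
  Real.sInf_nonneg <| by rintro _ ⟨x, -, rfl⟩; exact norm_nonneg _

lemma lowerBound_le_norm_apply (T : X →L[ℂ] X) {x : X} (hx : ‖x‖ = 1) : lowerBound T ≤ ‖T x‖ :=
  csInf_le ⟨0, by rintro _ ⟨y, -, rfl⟩; exact norm_nonneg _⟩ ⟨x, by simpa using hx, rfl⟩

variable [Nontrivial X]

lemma lowerBound_le_opNorm (T : X →L[ℂ] X) : lowerBound T ≤ ‖T‖ := by
  obtain ⟨x, hx⟩ := NormedSpace.sphere_nonempty_rclike ℂ (E := X) zero_le_one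
  rw [mem_sphere_zero_iff_norm] at hx
  simpa [hx] using (lowerBound_le_norm_apply T hx).trans (T.le_opNorm x)

lemma le_lowerBound {T : X →L[ℂ] X} {c : ℝ} (h : ∀ x, c * ‖x‖ ≤ ‖T x‖) : c ≤ lowerBound T := by
  obtain ⟨x, hx⟩ := NormedSpace.sphere_nonempty_rclike ℂ (E := X) zero_le_one
  refine le_csInf ⟨_, x, hx, rfl⟩ ?_
  rintro _ ⟨y, hy, rfl⟩
  simpa [mem_sphere_zero_iff_norm.1 hy] using h y

end LowerBound

section WeightedShiftBounds

variable {H : Type*} [NormedAddCommGroup H] [InnerProductSpace ℂ H]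
  {S : H →L[ℂ] H} {e : HilbertBasis ℕ ℂ H} {ω : ℕ → ℝ}

lemma IsWeightedShift.opNorm_pow_le (hS : IsWeightedShift S e ω) (hpos : ∀ n, 0 < ω n)
    {n : ℕ} {B : ℝ} (h : ∀ k, weightProd ω (k + n) ≤ B * weightProd ω k) : ‖S ^ n‖ ≤ B := by
  have hB : 0 ≤ B :=
    (pos_of_mul_pos_left ((weightProd_pos hpos _).trans_le (h 0)) (weightProd_pos hpos 0).le).le
  refine (S ^ n).opNorm_le_bound hB fun x => e.denseRange_linearCombination.induction_on x
    (isClosed_le (S ^ n).continuous.norm (continuous_const.mul continuous_norm)) fun l => ?_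
  rw [Finsupp.linearCombination_apply, Finsupp.sum]
  refine le_of_pow_le_pow_left₀ two_ne_zero (by positivity) ?_
  rw [mul_pow, hS.norm_pow_apply_sum_sq hpos e.orthonormal, e.orthonormal.norm_sum_smul_sq,
    mul_sum]
  refine sum_le_sum fun k _ => ?_
  rw [mul_comm (B ^ 2)]
  have hk := weightProd_pos hpos k
  gcongr
  · exact (div_pos (weightProd_pos hpos _) hk).le
  · exact (div_le_iff₀ hk).2 (h k)

lemma IsWeightedShift.le_lowerBound_pow (hS : IsWeightedShift S e ω) (hpos : ∀ n, 0 < ω n)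
    {n : ℕ} {c : ℝ} (hc : 0 ≤ c) (h : ∀ k, c * weightProd ω k ≤ weightProd ω (k + n)) :
    c ≤ lowerBound (S ^ n) := by
  have : Nontrivial H := ⟨e 0, 0, e.orthonormal.ne_zero 0⟩
  refine le_lowerBound fun x => e.denseRange_linearCombination.induction_on x
    (isClosed_le (continuous_const.mul continuous_norm) (S ^ n).continuous.norm) fun l => ?_
  rw [Finsupp.linearCombination_apply, Finsupp.sum]
  refine le_of_pow_le_pow_left₀ two_ne_zero (norm_nonneg _) ?_
  rw [mul_pow, hS.norm_pow_apply_sum_sq hpos e.orthonormal, e.orthonormal.norm_sum_smul_sq,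
    mul_sum]
  refine sum_le_sum fun k _ => ?_
  rw [mul_comm (c ^ 2)]
  gcongr
  exact (le_div_iff₀ (weightProd_pos hpos k)).2 (h k)

end WeightedShiftBounds

section ApproxEigenvector

variable {H : Type*} [NormedAddCommGroup H] [InnerProductSpace ℂ H]
  {S : H →L[ℂ] H} {e : HilbertBasis ℕ ℂ H} {ω : ℕ → ℝ}

noncomputable def approxEigenvector (e : HilbertBasis ℕ ℂ H) (ω : ℕ → ℝ) (p α n : ℕ) (z : ℂ) :
    H :=
  ∑ i ∈ range n,
    ((weightProd ω (p + i) / weightProd ω (p + α) : ℝ) * z ^ ((α : ℤ) - i) : ℂ) • e (p + i)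

lemma analyticOnNhd_approxEigenvector (e : HilbertBasis ℕ ℂ H) (ω : ℕ → ℝ) (p α n : ℕ) :
    AnalyticOnNhd ℂ (approxEigenvector e ω p α n) {0}ᶜ := by
  intro z hz
  exact Finset.analyticAt_fun_sum _ fun i _ =>
    ((analyticAt_const (𝕜 := ℂ)).mul (analyticAt_id.zpow hz)).smul
      (analyticAt_const (v := e (p + i)))

lemma one_le_norm_approxEigenvector (hpos : ∀ n, 0 < ω n) {p α n : ℕ} (hαn : α < n) (z : ℂ) :
    1 ≤ ‖approxEigenvector e ω p α n z‖ := by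
  have he : Orthonormal ℂ fun i => e (p + i) := e.orthonormal.comp _ (add_right_injective p)
  refine one_le_sq_iff_one_le_abs _ |>.1 ?_ |>.trans_eq (abs_norm _)
  rw [approxEigenvector, he.norm_sum_smul_sq]
  refine le_of_eq_of_le ?_ (single_le_sum (fun i _ => sq_nonneg _) (mem_range.2 hαn))
  simp [div_self (weightProd_pos hpos (p + α)).ne']

lemma IsWeightedShift.sub_smul_one_apply_approxEigenvector (hS : IsWeightedShift S e ω)
    (p α n : ℕ) {z : ℂ} (hz : z ≠ 0) :
    (S - z • 1) (approxEigenvector e ω p α n z) =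
      ((weightProd ω (p + n) / weightProd ω (p + α) : ℝ) * z ^ ((α : ℤ) - n + 1) : ℂ) • e (p + n)
      - ((weightProd ω p / weightProd ω (p + α) : ℝ) * z ^ ((α : ℤ) + 1) : ℂ) • e p := by
  set T : ℕ → H := fun i =>
    ((weightProd ω (p + i) / weightProd ω (p + α) : ℝ) * z ^ ((α : ℤ) - i) : ℂ) • e (p + i)
  set G : ℕ → H := fun i =>
    ((weightProd ω (p + i) / weightProd ω (p + α) : ℝ) * z ^ ((α : ℤ) - i + 1) : ℂ) • e (p + i)
  have hshift : ∀ i, S (T i) = G (i + 1) := fun i => by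
    rw [map_smul, hS, smul_smul]
    simp only [G, ← add_assoc, weightProd_succ, Nat.cast_add, Nat.cast_one, sub_add_eq_sub_sub,
      sub_add_cancel]
    congr 1
    push_cast
    ring
  have hscale : ∀ i, z • T i = G i := fun i => by
    simp only [T, G, smul_smul, zpow_add_one₀ hz]
    ring_nf
  calc (S - z • 1) (∑ i ∈ range n, T i)
      = ∑ i ∈ range n, (G (i + 1) - G i) := by
        simp only [map_sum, sub_apply, smul_apply, one_apply_eq_self, hshift, hscale]
    _ = G n - G 0 := sum_range_sub G n
    _ = _ := by simp [G]

lemma IsWeightedShift.norm_sub_smul_one_apply_approxEigenvector_le (hS : IsWeightedShift S e ω)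
    (hpos : ∀ n, 0 < ω n) {p α γ : ℕ} {τ₁ τ₂ ε : ℝ} (hτ₁ : 0 < τ₁) {z : ℂ} (hz₁ : τ₁ ≤ ‖z‖)
    (hz₂ : ‖z‖ ≤ τ₂) (hpast : τ₂ ^ α * weightProd ω p ≤ ε * weightProd ω (p + α))
    (hfut : weightProd ω (p + α + γ) ≤ ε * τ₁ ^ γ * weightProd ω (p + α)) :
    ‖(S - z • 1) (approxEigenvector e ω p α (α + γ) z)‖ ≤ 2 * ε * τ₂ := by
  have hz : 0 < ‖z‖ := hτ₁.trans_le hz₁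
  have hτ₂ : 0 ≤ τ₂ := hz.le.trans hz₂
  have hb := weightProd_pos hpos (p + α)
  have hb₀ := weightProd_pos hpos p
  have hb₁ := weightProd_pos hpos (p + α + γ)
  rw [hS.sub_smul_one_apply_approxEigenvector p α (α + γ) (norm_pos_iff.1 hz)]
  refine (norm_sub_le _ _).trans ?_
  simp only [norm_smul, norm_mul, Complex.norm_real, norm_zpow, e.orthonormal.norm_eq_one, mul_one,
    Real.norm_eq_abs, abs_div, abs_of_pos hb, abs_of_pos hb₀, ← add_assoc, abs_of_pos hb₁]
  have hfuture : weightProd ω (p + α + γ) / weightProd ω (p + α) * ‖z‖ ^ ((α : ℤ) - ↑(α + γ) + 1)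
      ≤ ε * τ₂ := by
    rw [show (α : ℤ) - ↑(α + γ) + 1 = 1 - γ by push_cast; ring, zpow_sub₀ hz.ne', zpow_one,
      zpow_natCast]
    have hratio := (div_le_iff₀ hb).2 hfut
    calc _ ≤ (ε * τ₁ ^ γ) * (τ₂ / τ₁ ^ γ) :=
          mul_le_mul hratio (div_le_div₀ hτ₂ hz₂ (by positivity) (by gcongr)) (by positivity)
            ((div_nonneg hb₁.le hb.le).trans hratio)
      _ = ε * τ₂ := by field_simp
  have hpast' : weightProd ω p / weightProd ω (p + α) * ‖z‖ ^ ((α : ℤ) + 1) ≤ ε * τ₂ := by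
    rw [zpow_add_one₀ hz.ne', zpow_natCast]
    calc _ ≤ weightProd ω p / weightProd ω (p + α) * (τ₂ ^ α * τ₂) := by gcongr
      _ = τ₂ ^ α * weightProd ω p / weightProd ω (p + α) * τ₂ := by ring
      _ ≤ ε * τ₂ := by
          gcongr
          exact (div_le_iff₀ hb).2 hpast
  linarith

end ApproxEigenvector

def GrowthDichotomy (β : ℕ → ℝ) (τ₁ τ₂ : ℝ) : Prop :=
  ∃ ε > 0, ∀ p α γ : ℕ,
    ε * β (p + α) ≤ τ₂ ^ α * β p ∨ ε * τ₁ ^ γ * β (p + α) ≤ β (p + α + γ)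

theorem HasBishopBeta.growthDichotomy_weightProd {H : Type*} [NormedAddCommGroup H]
    [InnerProductSpace ℂ H] {S : H →L[ℂ] H} {e : HilbertBasis ℕ ℂ H} {ω : ℕ → ℝ}
    (hβ : HasBishopBeta S) (hS : IsWeightedShift S e ω) (hpos : ∀ n, 0 < ω n) {τ₁ τ₂ : ℝ}
    (hτ₁ : 0 < τ₁) (hτ : τ₁ < τ₂) : GrowthDichotomy (weightProd ω) τ₁ τ₂ := by
  by_contra hcon
  unfold GrowthDichotomy at hcon
  push Not at hcon
  choose p α γ hpast hfut using fun ν : ℕ => hcon (1 / ((ν : ℝ) + 1)) (by positivity)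
  have hα : ∀ ν, α ν < α ν + γ ν := fun ν => by
    refine Nat.lt_add_of_pos_right (Nat.pos_of_ne_zero fun h0 => ?_)
    have h := hfut ν
    rw [h0, pow_zero, mul_one, add_zero] at h
    exact (mul_le_of_le_one_left (weightProd_pos hpos _).le
      (div_le_one_of_le₀ (by simp) (by positivity))).not_gt h
  set U : Set ℂ := {z | τ₁ < ‖z‖ ∧ ‖z‖ < τ₂}
  have hU : IsOpen U :=
    (isOpen_lt continuous_const continuous_norm).inter (isOpen_lt continuous_norm continuous_const)
  set F := fun ν => approxEigenvector e ω (p ν) (α ν) (α ν + γ ν)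
  have hanalytic : ∀ ν, AnalyticOnNhd ℂ (F ν) U := fun ν =>
    (analyticOnNhd_approxEigenvector e ω _ _ _).mono fun z hz =>
      norm_pos_iff.1 (hτ₁.trans hz.1)
  have hbound : Tendsto (fun ν : ℕ => 2 * (1 / ((ν : ℝ) + 1)) * τ₂) atTop (𝓝 0) := by
    simpa using (tendsto_one_div_add_atTop_nhds_zero_nat.const_mul 2).mul_const τ₂
  have hunif : TendstoUniformlyOn (fun ν z => (S - z • 1) (F ν z)) 0 atTop U := by
    refine Metric.tendstoUniformlyOn_iff.2 fun δ hδ => ?_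
    filter_upwards [hbound.eventually_lt_const hδ] with ν hν z hz
    rw [Pi.zero_apply, dist_zero_left]
    exact (hS.norm_sub_smul_one_apply_approxEigenvector_le hpos hτ₁ hz.1.le hz.2.le
      (hpast ν).le (hfut ν).le).trans_lt hν
  set z₀ : ℂ := ↑((τ₁ + τ₂) / 2)
  have hz₀ : z₀ ∈ U := by
    have : ‖z₀‖ = (τ₁ + τ₂) / 2 := by rw [Complex.norm_real, Real.norm_of_nonneg (by linarith)]
    exact ⟨by linarith, by linarith⟩
  have hF := hβ U hU F hanalytic (fun K hK _ => hunif.mono hK) {z₀} (by simpa using hz₀)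
    isCompact_singleton
  have hFz₀ : Tendsto (fun ν => ‖F ν z₀‖) atTop (𝓝 0) := by
    simpa using (hF.tendsto_at rfl).norm
  obtain ⟨ν, hν⟩ := (hFz₀.eventually_lt_const one_pos).exists
  exact hν.not_ge (one_le_norm_approxEigenvector hpos (hα ν) z₀)

lemma eventually_pow_lt_mul_pow {a b c : ℝ} (ha : 0 ≤ a) (hab : a < b) (hc : 0 < c) :
    ∀ᶠ m : ℕ in atTop, a ^ m < c * b ^ m := by
  have hb : 0 < b := ha.trans_lt hab
  filter_upwards [(tendsto_pow_atTop_nhds_zero_of_lt_one (div_nonneg ha hb.le)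
    ((div_lt_one hb).2 hab)).eventually_lt_const hc] with m hm
  rwa [div_pow, div_lt_iff₀ (pow_pos hb m)] at hm

section Growth

variable {β : ℕ → ℝ}

lemma exists_mul_pow_le_of_tail_mul_pow_le (hβ : ∀ k, 0 < β k) {t ε : ℝ} (ht : 0 < t)
    (hε : 0 < ε) {J : ℕ} (h : ∀ d γ, ε * t ^ γ * β (J + d) ≤ β (J + d + γ)) :
    ∃ c > 0, ∀ n ≥ J, ∀ k, c * t ^ n * β k ≤ β (k + n) := by
  obtain ⟨k₀, -, hmin⟩ := (range (J + 1)).exists_min_image (fun k => β J / (t ^ (J - k) * β k))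
    ⟨J, self_mem_range_succ J⟩
  set C := β J / (t ^ (J - k₀) * β k₀)
  have hC : 0 < C := div_pos (hβ J) (mul_pos (pow_pos ht _) (hβ k₀))
  have hC₁ : C ≤ 1 := by simpa [div_self (hβ J).ne'] using hmin J (self_mem_range_succ J)
  refine ⟨ε * C, mul_pos hε hC, fun n hn k => ?_⟩
  rcases le_or_gt J k with hJk | hkJ
  · obtain ⟨d, rfl⟩ := Nat.exists_eq_add_of_le hJk
    calc ε * C * t ^ n * β (J + d) ≤ ε * t ^ n * β (J + d) := by
          gcongr
          · exact (hβ _).le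
          · exact mul_le_of_le_one_right hε.le hC₁
      _ ≤ β (J + d + n) := h d n
  · have hk : C * t ^ (J - k) * β k ≤ β J := by
      have := hmin k (mem_range.2 (by omega))
      rwa [le_div_iff₀ (mul_pos (pow_pos ht _) (hβ k)), ← mul_assoc] at this
    have hpow : t ^ n = t ^ (k + n - J) * t ^ (J - k) := by rw [← pow_add]; congr 1; omega
    calc ε * C * t ^ n * β k = ε * t ^ (k + n - J) * (C * t ^ (J - k) * β k) := by
          rw [hpow]; ring
      _ ≤ ε * t ^ (k + n - J) * β (J + 0) := by simpa using by gcongr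
      _ ≤ β (J + 0 + (k + n - J)) := h 0 _
      _ = β (k + n) := by congr 1; omega

theorem exists_mul_pow_le_of_growthDichotomy (hβ : ∀ k, 0 < β k) {t u : ℝ} (ht : 0 < t)
    (htu : t < u) (hD : ∀ τ₁ τ₂, 0 < τ₁ → τ₁ < τ₂ → GrowthDichotomy β τ₁ τ₂)
    (hrise : ∃ᶠ m in atTop, ∃ l, u ^ m * β l < β (l + m)) :
    ∃ c > 0, ∃ N, ∀ n ≥ N, ∀ k, c * t ^ n * β k ≤ β (k + n) := by
  obtain ⟨t₁, htt₁, ht₁u⟩ := exists_between htu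
  obtain ⟨t₂, ht₁t₂, ht₂u⟩ := exists_between ht₁u
  have ht₁ : 0 < t₁ := ht.trans htt₁
  obtain ⟨ε₁, hε₁, hD₁⟩ := hD t₁ t₂ ht₁ ht₁t₂
  obtain ⟨ε₂, hε₂, hD₂⟩ := hD t t₁ ht htt₁
  obtain ⟨m, ⟨l, hl⟩, hm₂, hm₁⟩ := (hrise.and_eventually
    ((eventually_pow_lt_mul_pow (ht₁.trans ht₁t₂).le ht₂u hε₁).and
      (eventually_pow_lt_mul_pow ht₁.le ht₁u (mul_pos hε₁ hε₂)))).exists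
  have hrise : t₂ ^ m * β l < ε₁ * β (l + m) :=
    calc t₂ ^ m * β l < ε₁ * u ^ m * β l := by gcongr; exact hβ l
      _ < ε₁ * β (l + m) := by rw [mul_assoc]; gcongr
  have hgrow₁ : ∀ d, ε₁ * t₁ ^ d * β (l + m) ≤ β (l + m + d) := fun d =>
    (hD₁ l m d).resolve_left hrise.not_ge
  have hgrow : ∀ d γ, ε₂ * t ^ γ * β (l + m + d) ≤ β (l + m + d + γ) := fun d γ => by
    refine (add_assoc l m d ▸ hD₂ l (m + d) γ).resolve_left fun h => h.not_gt ?_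
    calc t₁ ^ (m + d) * β l = t₁ ^ m * (t₁ ^ d * β l) := by ring
      _ ≤ ε₁ * ε₂ * u ^ m * (t₁ ^ d * β l) := by gcongr; exact mul_pos (pow_pos ht₁ d) (hβ l) |>.le
      _ = ε₂ * (ε₁ * t₁ ^ d * (u ^ m * β l)) := by ring
      _ < ε₂ * (ε₁ * t₁ ^ d * β (l + m)) := by gcongr
      _ ≤ ε₂ * β (l + m + d) := by gcongr; exact hgrow₁ d
  obtain ⟨c, hc, hcN⟩ := exists_mul_pow_le_of_tail_mul_pow_le hβ ht hε₂ hgrow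
  exact ⟨c, hc, l + m, hcN⟩

end Growth

lemma tendsto_norm_pow_rpow_inv_spectralRadius {A : Type*} [NormedRing A] [NormedAlgebra ℂ A]
    [CompleteSpace A] [NormOneClass A] (a : A) :
    Tendsto (fun n : ℕ => ‖a ^ n‖ ^ (n : ℝ)⁻¹) atTop (𝓝 (spectralRadius ℂ a).toReal) := by
  have hfin : spectralRadius ℂ a ≠ ⊤ :=
    ne_top_of_le_ne_top ENNReal.coe_ne_top (spectrum.spectralRadius_le_nnnorm a)
  refine ((ENNReal.tendsto_toReal hfin).comp
    (spectrum.pow_norm_pow_one_div_tendsto_nhds_spectralRadius a)).congr fun n => ?_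
  rw [Function.comp_apply, ENNReal.toReal_ofReal (by positivity), one_div]

lemma eventually_lt_rpow_inv_of_mul_pow_le {x : ℕ → ℝ} {a c t : ℝ} (hc : 0 < c) (ht : 0 ≤ t)
    (hat : a < t) (h : ∀ᶠ n in atTop, c * t ^ n ≤ x n) :
    ∀ᶠ n : ℕ in atTop, a < x n ^ (n : ℝ)⁻¹ := by
  have hroot : Tendsto (fun n : ℕ => c ^ (n : ℝ)⁻¹ * t) atTop (𝓝 t) := by
    simpa using ((tendsto_const_nhds (x := c)).rpow
      (tendsto_inv_atTop_zero.comp tendsto_natCast_atTop_atTop) (Or.inl hc.ne')).mul_const t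
  filter_upwards [h, hroot.eventually_const_lt hat, eventually_ne_atTop 0] with n hn hlt hn0
  calc a < c ^ (n : ℝ)⁻¹ * t := hlt
    _ = (c * t ^ n) ^ (n : ℝ)⁻¹ := by
        rw [Real.mul_rpow hc.le (pow_nonneg ht n), Real.pow_rpow_inv_natCast ht hn0]
    _ ≤ x n ^ (n : ℝ)⁻¹ := by gcongr

variable {H : Type*} [NormedAddCommGroup H] [InnerProductSpace ℂ H] [CompleteSpace H]

theorem bishopBeta_implies_r₁_eq_r_general (S : H →L[ℂ] H)
    (e : HilbertBasis ℕ ℂ H) (ω : ℕ → ℝ) (hpos : ∀ n, 0 < ω n)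
    (hS : ∀ n, S (e n) = (ω n : ℂ) • e (n + 1))
    (hβ : HasBishopBeta S) :
    Tendsto (fun n : ℕ => lowerBound (S ^ n) ^ ((n : ℝ)⁻¹)) atTop
      (nhds (spectralRadius ℂ S).toReal) := by
  have : Nontrivial H := ⟨e 0, 0, e.orthonormal.ne_zero 0⟩
  replace hS : IsWeightedShift S e ω := hS
  have hgelfand := tendsto_norm_pow_rpow_inv_spectralRadius S
  refine tendsto_order.2 ⟨fun a ha => ?_, fun a ha => ?_⟩
  · rcases lt_or_ge a 0 with ha₀ | ha₀
    · exact .of_forall fun n => ha₀.trans_le (Real.rpow_nonneg (lowerBound_nonneg _) _)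
    obtain ⟨t, hat, htr⟩ := exists_between ha
    obtain ⟨u, htu, hur⟩ := exists_between htr
    have ht : 0 < t := ha₀.trans_lt hat
    have hrise : ∃ᶠ m in atTop, ∃ l, u ^ m * weightProd ω l < weightProd ω (l + m) := by
      refine Eventually.frequently ?_
      filter_upwards [hgelfand.eventually_const_lt hur, eventually_ne_atTop 0] with m hm hm₀
      by_contra! hfall
      refine (hS.opNorm_pow_le hpos hfall).not_gt ?_
      simpa [Real.rpow_inv_natCast_pow (norm_nonneg _) hm₀] using
        pow_lt_pow_left₀ hm (by linarith) hm₀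
    obtain ⟨c, hc, N, hN⟩ := exists_mul_pow_le_of_growthDichotomy (weightProd_pos hpos) ht htu
      (fun _ _ hτ₁ hτ => hβ.growthDichotomy_weightProd hS hpos hτ₁ hτ) hrise
    refine eventually_lt_rpow_inv_of_mul_pow_le hc ht.le hat ?_
    filter_upwards [eventually_ge_atTop N] with n hn
    exact hS.le_lowerBound_pow hpos (mul_pos hc (pow_pos ht n)).le (hN n hn)
  · filter_upwards [hgelfand.eventually_lt_const ha] with n hn
    exact (Real.rpow_le_rpow (lowerBound_nonneg _) (lowerBound_le_opNorm _)
      (by positivity)).trans_lt hn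

/-- If a unilateral weighted shift with positive bounded weights possesses Bishop's
property (β), then `r₁(S) = lim m(Sⁿ)^(1/n)` equals the spectral radius `r(S)`. -/
theorem bishopBeta_implies_r₁_eq_r (S : H →L[ℂ] H)
    (e : HilbertBasis ℕ ℂ H) (ω : ℕ → ℝ) (hpos : ∀ n, 0 < ω n)
    (hbd : ∃ M : ℝ, ∀ n, ω n ≤ M)
    (hS : ∀ n, S (e n) = (ω n : ℂ) • e (n + 1))
    (hβ : HasBishopBeta S) :
    Tendsto (fun n : ℕ => lowerBound (S ^ n) ^ ((n : ℝ)⁻¹)) atTop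
      (nhds (spectralRadius ℂ S).toReal) :=
  bishopBeta_implies_r₁_eq_r_general S e ω hpos hS hβ
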